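/- arXiv:2311.14194 — 9 statements merged into one kernel-verified Lean document; each statement's English description precedes it below -/
import Mathlib

section
/- Let p₁, p₂, p₃ ∈ ℝ be distinct, with Pₗ = ((1-pₗ²)/(1+pₗ²), 2pₗ/(1+pₗ²)) points on the unit circle. Define I = Σₗ 1/(pₗ - pₗ₊₁), J = (1/2) Σₗ (pₗ + pₗ₊₁)/(pₗ - pₗ₊₁), K = Σₗ pₗpₗ₊₁/(pₗ - pₗ₊₁) (indices mod 3), and assume I + K ≠ 0. Then the point S = ((I-K)/(I+K), 2J/(I+K)) lies on each line through Pₗ₋₁ and the pole Pₗ* = ((1-pₗpₗ₊₁)/(1+pₗpₗ₊₁), (pₗ+pₗ₊₁)/(1+pₗpₗ₊₁)) whenever pₗpₗ₊₁ ≠ -1. In particular, S is the symmedian point of the triangle P₁P₂P₃. -/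
/-- The point on the unit circle parametrized by `p ∈ ℝP¹`. -/
noncomputable def circlePt (p : ℝ) : ℝ × ℝ := ((1 - p ^ 2) / (1 + p ^ 2), 2 * p / (1 + p ^ 2))

/-- The pole of the chord with ideal endpoints `a`, `b` with respect to the unit circle. -/
noncomputable def chordPole (a b : ℝ) : ℝ × ℝ := ((1 - a * b) / (1 + a * b), (a + b) / (1 + a * b))

/-- Three points of `ℝ²` are collinear (determinant condition). -/
def Collin (A B C : ℝ × ℝ) : Prop :=
  (B.1 - A.1) * (C.2 - A.2) - (B.2 - A.2) * (C.1 - A.1) = 0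

private theorem key (p₁ p₂ p₃ I J K : ℝ)
    (h12 : p₁ ≠ p₂) (h23 : p₂ ≠ p₃) (h31 : p₃ ≠ p₁)
    (hI : I = 1 / (p₁ - p₂) + 1 / (p₂ - p₃) + 1 / (p₃ - p₁))
    (hJ : J = (1 / 2) * ((p₁ + p₂) / (p₁ - p₂) + (p₂ + p₃) / (p₂ - p₃) + (p₃ + p₁) / (p₃ - p₁)))
    (hK : K = p₁ * p₂ / (p₁ - p₂) + p₂ * p₃ / (p₂ - p₃) + p₃ * p₁ / (p₃ - p₁))
    (hIK : I + K ≠ 0) (h : p₁ * p₂ ≠ -1) :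
      Collin (circlePt p₃) (chordPole p₁ p₂) ((I - K) / (I + K), 2 * J / (I + K)) := by
  have d12 : p₁ - p₂ ≠ 0 := sub_ne_zero.mpr h12
  have d23 : p₂ - p₃ ≠ 0 := sub_ne_zero.mpr h23
  have d31 : p₃ - p₁ ≠ 0 := sub_ne_zero.mpr h31
  have hq3 : (1:ℝ) + p₃ ^ 2 ≠ 0 := by positivity
  have hab : (1:ℝ) + p₁ * p₂ ≠ 0 := fun h' => h (by linarith)
  set P : ℝ := (p₂-p₃)*(p₃-p₁) + (p₁-p₂)*(p₃-p₁) + (p₁-p₂)*(p₂-p₃)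
      + p₁*p₂*(p₂-p₃)*(p₃-p₁) + p₂*p₃*(p₁-p₂)*(p₃-p₁) + p₃*p₁*(p₁-p₂)*(p₂-p₃) with hPdef
  have hPeq : P = (I + K) * ((p₁-p₂)*((p₂-p₃)*(p₃-p₁))) := by
    rw [hPdef, hI, hK]; field_simp; ring
  have hP : P ≠ 0 := by
    rw [hPeq]; exact mul_ne_zero hIK (mul_ne_zero d12 (mul_ne_zero d23 d31))
  have e1 : (I - K) / (I + K) =
      ((p₂-p₃)*(p₃-p₁) + (p₁-p₂)*(p₃-p₁) + (p₁-p₂)*(p₂-p₃)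
      - p₁*p₂*(p₂-p₃)*(p₃-p₁) - p₂*p₃*(p₁-p₂)*(p₃-p₁) - p₃*p₁*(p₁-p₂)*(p₂-p₃)) / P := by
    rw [div_eq_div_iff hIK hP, hPeq, hI, hK]; field_simp; ring
  have e2 : 2 * J / (I + K) =
      ((p₁+p₂)*(p₂-p₃)*(p₃-p₁) + (p₂+p₃)*(p₁-p₂)*(p₃-p₁) + (p₃+p₁)*(p₁-p₂)*(p₂-p₃)) / P := by
    rw [div_eq_div_iff hIK hP, hPeq, hJ]; field_simp
  rw [e1, e2]
  simp only [Collin, circlePt, chordPole]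
  field_simp
  ring

/-- The point `S = ((I-K)/(I+K), 2J/(I+K))` lies on each line joining the vertex `Pₗ₋₁`
to the pole of the opposite side `PₗPₗ₊₁` (whenever `pₗpₗ₊₁ ≠ -1`); i.e. `S` is the
symmedian point of the inscribed triangle `P₁P₂P₃`. -/
theorem stmt_2 (p₁ p₂ p₃ I J K : ℝ)
    (h12 : p₁ ≠ p₂) (h23 : p₂ ≠ p₃) (h31 : p₃ ≠ p₁)
    (hI : I = 1 / (p₁ - p₂) + 1 / (p₂ - p₃) + 1 / (p₃ - p₁))
    (hJ : J = (1 / 2) * ((p₁ + p₂) / (p₁ - p₂) + (p₂ + p₃) / (p₂ - p₃) + (p₃ + p₁) / (p₃ - p₁)))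
    (hK : K = p₁ * p₂ / (p₁ - p₂) + p₂ * p₃ / (p₂ - p₃) + p₃ * p₁ / (p₃ - p₁))
    (hIK : I + K ≠ 0) :
    (p₁ * p₂ ≠ -1 →
      Collin (circlePt p₃) (chordPole p₁ p₂) ((I - K) / (I + K), 2 * J / (I + K))) ∧
    (p₂ * p₃ ≠ -1 →
      Collin (circlePt p₁) (chordPole p₂ p₃) ((I - K) / (I + K), 2 * J / (I + K))) ∧
    (p₃ * p₁ ≠ -1 →
      Collin (circlePt p₂) (chordPole p₃ p₁) ((I - K) / (I + K), 2 * J / (I + K))) := by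
  refine ⟨key p₁ p₂ p₃ I J K h12 h23 h31 hI hJ hK hIK,
    key p₂ p₃ p₁ I J K h23 h31 h12 (by rw [hI]; ring) (by rw [hJ]; ring)
      (by rw [hK]; ring) hIK,
    key p₃ p₁ p₂ I J K h31 h12 h23 (by rw [hI]; ring) (by rw [hJ]; ring)
      (by rw [hK]; ring) hIK⟩
end

section
/- Let S ∈ ℝ² with |S| < 1, and let X ∈ ℝ² satisfy -(X · S^⊥) X^⊥ + X - S = 0, where (w,z)^⊥ = (-z,w). If |X| ≠ 1, then X = S. -/
/-- Key gradient-vanishing equation: if `|S| < 1` and `X` satisfies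
`-(X · S^⊥) X^⊥ + X - S = 0` with `|X| ≠ 1`, then `X = S`.
Here `(w,z)^⊥ = (-z,w)` is counterclockwise rotation by `π/2`. -/
theorem stmt_3 (S X : ℝ × ℝ) (hS : S.1 ^ 2 + S.2 ^ 2 < 1)
    (h1 : -(X.1 * (-S.2) + X.2 * S.1) * (-X.2) + X.1 - S.1 = 0)
    (h2 : -(X.1 * (-S.2) + X.2 * S.1) * X.1 + X.2 - S.2 = 0)
    (hX : X.1 ^ 2 + X.2 ^ 2 ≠ 1) :
    X = S := by
  have key : (X.1 * (-S.2) + X.2 * S.1) * (X.1 ^ 2 + X.2 ^ 2 - 1) = 0 := by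
    linear_combination X.2 * h1 - X.1 * h2
  have hc : X.1 * (-S.2) + X.2 * S.1 = 0 := by
    rcases mul_eq_zero.mp key with h | h
    · exact h
    · exact absurd (by linarith : X.1 ^ 2 + X.2 ^ 2 = 1) hX
  have e1 : X.1 = S.1 := by linear_combination h1 - X.2 * hc
  have e2 : X.2 = S.2 := by linear_combination h2 + X.1 * hc
  exact Prod.ext e1 e2
end

section
/- Let (p₁, p₂, p₃, p₄) be an ideal quadrilateral with I + K ≠ 0. Then its hyperbolic barycenter S = ((I-K)/(I+K), 2J/(I+K)) lies on the line through P₁ and P₃ and on the line through P₂ and P₄, where Pₗ = ((1-pₗ²)/(1+pₗ²), 2pₗ/(1+pₗ²)). -/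
set_option maxHeartbeats 1000000


lemma collin_div (A B : ℝ × ℝ) (u v d : ℝ) (hd : d ≠ 0)
    (h : (B.1 - A.1) * (v - d * A.2) - (B.2 - A.2) * (u - d * A.1) = 0) :
    Collin A B (u / d, v / d) := by
  unfold Collin
  simp only
  field_simp
  linear_combination h

/-- The hyperbolic barycenter of an ideal quadrilateral lies on both of its diagonals. -/
theorem stmt_7 (p₁ p₂ p₃ p₄ I J K : ℝ)
    (h12 : p₁ ≠ p₂) (h13 : p₁ ≠ p₃) (h14 : p₁ ≠ p₄)
    (h23 : p₂ ≠ p₃) (h24 : p₂ ≠ p₄) (h34 : p₃ ≠ p₄)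
    (hI : I = 1 / (p₁ - p₂) + 1 / (p₂ - p₃) + 1 / (p₃ - p₄) + 1 / (p₄ - p₁))
    (hJ : J = (1 / 2) * ((p₁ + p₂) / (p₁ - p₂) + (p₂ + p₃) / (p₂ - p₃)
        + (p₃ + p₄) / (p₃ - p₄) + (p₄ + p₁) / (p₄ - p₁)))
    (hK : K = p₁ * p₂ / (p₁ - p₂) + p₂ * p₃ / (p₂ - p₃)
        + p₃ * p₄ / (p₃ - p₄) + p₄ * p₁ / (p₄ - p₁))
    (hIK : I + K ≠ 0) :
    Collin (circlePt p₁) (circlePt p₃) ((I - K) / (I + K), 2 * J / (I + K)) ∧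
    Collin (circlePt p₂) (circlePt p₄) ((I - K) / (I + K), 2 * J / (I + K)) := by
  have d12 : p₁ - p₂ ≠ 0 := sub_ne_zero.mpr h12
  have d23 : p₂ - p₃ ≠ 0 := sub_ne_zero.mpr h23
  have d34 : p₃ - p₄ ≠ 0 := sub_ne_zero.mpr h34
  have d41 : p₄ - p₁ ≠ 0 := sub_ne_zero.mpr h14.symm
  have q1 : (1 : ℝ) + p₁ ^ 2 ≠ 0 := by positivity
  have q2 : (1 : ℝ) + p₂ ^ 2 ≠ 0 := by positivity
  have q3 : (1 : ℝ) + p₃ ^ 2 ≠ 0 := by positivity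
  have q4 : (1 : ℝ) + p₄ ^ 2 ≠ 0 := by positivity
  have e1 : I + K = (p₁ - p₃) * (p₂ - p₄)
      * ((p₂ - p₁) * (1 + p₃ * p₄) + (p₄ - p₃) * (1 + p₁ * p₂))
      / ((p₁ - p₂) * ((p₂ - p₃) * ((p₃ - p₄) * (p₄ - p₁)))) := by
    rw [hI, hK]; field_simp; ring
  have e2 : I - K = (p₁ - p₃) * (p₂ - p₄)
      * ((p₂ - p₁) * (1 - p₃ * p₄) + (p₄ - p₃) * (1 - p₁ * p₂))
      / ((p₁ - p₂) * ((p₂ - p₃) * ((p₃ - p₄) * (p₄ - p₁)))) := by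
    rw [hI, hK]; field_simp; ring
  have e3 : 2 * J = (p₁ - p₃) * (p₂ - p₄) * (2 * (p₂ * p₄ - p₁ * p₃))
      / ((p₁ - p₂) * ((p₂ - p₃) * ((p₃ - p₄) * (p₄ - p₁)))) := by
    rw [hJ]; field_simp; ring
  constructor
  · apply collin_div _ _ _ _ _ hIK
    unfold circlePt
    simp only
    rw [e1, e2, e3]
    field_simp
    ring
  · apply collin_div _ _ _ _ _ hIK
    unfold circlePt
    simp only
    rw [e1, e2, e3]
    field_simp
    ring
end

section
/- Let (p₁, p₂, p₃, p₄) be an ideal quadrilateral with all pₗpₗ₊₁ ≠ -1 and I + K ≠ 0. Then the hyperbolic barycenter S = ((I-K)/(I+K), 2J/(I+K)) lies on the line through the poles P₁* and P₃* and on the line through the poles P₂* and P₄*, where Pₗ* = ((1-pₗpₗ₊₁)/(1+pₗpₗ₊₁), (pₗ+pₗ₊₁)/(1+pₗpₗ₊₁)). -/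
set_option maxHeartbeats 1600000 in
/-- The hyperbolic barycenter of an ideal quadrilateral lies on both diagonals `P₁*P₃*`
and `P₂*P₄*` of the circumscribed quadrilateral formed by the poles of the sides. -/
theorem stmt_8 (p₁ p₂ p₃ p₄ I J K : ℝ)
    (h12 : p₁ ≠ p₂) (h13 : p₁ ≠ p₃) (h14 : p₁ ≠ p₄)
    (h23 : p₂ ≠ p₃) (h24 : p₂ ≠ p₄) (h34 : p₃ ≠ p₄)
    (t1 : p₁ * p₂ ≠ -1) (t2 : p₂ * p₃ ≠ -1) (t3 : p₃ * p₄ ≠ -1) (t4 : p₄ * p₁ ≠ -1)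
    (hI : I = 1 / (p₁ - p₂) + 1 / (p₂ - p₃) + 1 / (p₃ - p₄) + 1 / (p₄ - p₁))
    (hJ : J = (1 / 2) * ((p₁ + p₂) / (p₁ - p₂) + (p₂ + p₃) / (p₂ - p₃)
        + (p₃ + p₄) / (p₃ - p₄) + (p₄ + p₁) / (p₄ - p₁)))
    (hK : K = p₁ * p₂ / (p₁ - p₂) + p₂ * p₃ / (p₂ - p₃)
        + p₃ * p₄ / (p₃ - p₄) + p₄ * p₁ / (p₄ - p₁))
    (hIK : I + K ≠ 0) :
    Collin (chordPole p₁ p₂) (chordPole p₃ p₄) ((I - K) / (I + K), 2 * J / (I + K)) ∧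
    Collin (chordPole p₂ p₃) (chordPole p₄ p₁) ((I - K) / (I + K), 2 * J / (I + K)) := by
  have d12 : p₁ - p₂ ≠ 0 := sub_ne_zero.mpr h12
  have d23 : p₂ - p₃ ≠ 0 := sub_ne_zero.mpr h23
  have d34 : p₃ - p₄ ≠ 0 := sub_ne_zero.mpr h34
  have d41 : p₄ - p₁ ≠ 0 := sub_ne_zero.mpr h14.symm
  have d13 : p₁ - p₃ ≠ 0 := sub_ne_zero.mpr h13
  have d24 : p₂ - p₄ ≠ 0 := sub_ne_zero.mpr h24
  have n1 : 1 + p₁ * p₂ ≠ 0 := fun h => t1 (by linarith)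
  have n2 : 1 + p₂ * p₃ ≠ 0 := fun h => t2 (by linarith)
  have n3 : 1 + p₃ * p₄ ≠ 0 := fun h => t3 (by linarith)
  have n4 : 1 + p₄ * p₁ ≠ 0 := fun h => t4 (by linarith)
  set E : ℝ := (p₁ - p₃) * (p₂ - p₄) / ((p₁ - p₂) * (p₂ - p₃) * (p₃ - p₄) * (p₄ - p₁))
    with hEdef
  set a : ℝ := p₂ + p₄ - p₁ - p₃ with hadef
  set b : ℝ := 2 * (p₂ * p₄ - p₁ * p₃) with hbdef
  set c : ℝ := p₂ * p₄ * (p₁ + p₃) - p₁ * p₃ * (p₂ + p₄) with hcdef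
  have hE : E ≠ 0 := div_ne_zero (mul_ne_zero d13 d24)
    (mul_ne_zero (mul_ne_zero (mul_ne_zero d12 d23) d34) d41)
  have hIe : I = E * a := by
    rw [hI, hEdef, hadef]; field_simp; ring
  have hKe : K = E * c := by
    rw [hK, hEdef, hcdef]; field_simp; ring
  have hJe : 2 * J = E * b := by
    rw [hJ, hEdef, hbdef]; field_simp; ring
  have hIKe : I + K = E * (a + c) := by rw [hIe, hKe]; ring
  have hIMKe : I - K = E * (a - c) := by rw [hIe, hKe]; ring
  have hac : a + c ≠ 0 := by
    intro h
    exact hIK (by rw [hIKe, h, mul_zero])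
  have hx : (I - K) / (I + K) = (a - c) / (a + c) := by
    rw [hIMKe, hIKe, mul_div_mul_left _ _ hE]
  have hy : 2 * J / (I + K) = b / (a + c) := by
    rw [hJe, hIKe, mul_div_mul_left _ _ hE]
  rw [hx, hy]
  constructor
  · simp only [Collin, chordPole]
    field_simp
    ring
  · simp only [Collin, chordPole]
    field_simp
    ring
end

section
/- An ideal triangle (p₁, p₂, p₃) satisfies S_P = (0,0) (i.e., I = K and J = 0) if and only if it is the image of the regular ideal triangle under a rotation about the origin. Equivalently: if p₃ = 0, then J = 0 and I - K = 0 together imply {p₁, p₂} = {√3, -√3}. -/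
/-!
With `p₃ = 0` the last two summands of `J` are `1` and `-1`, so `J = (p₁ + p₂) / (2 (p₁ - p₂))`
vanishes exactly when `p₂ = -p₁`. For the triangle `(p, -p, 0)` one computes `I = -3 / (2p)` and
`K = -p / 2`, so `I = K` exactly when `p² = 3`.
-/

noncomputable section

namespace IdealTriangle

def I (p₁ p₂ p₃ : ℝ) : ℝ := 1 / (p₁ - p₂) + 1 / (p₂ - p₃) + 1 / (p₃ - p₁)

def J (p₁ p₂ p₃ : ℝ) : ℝ :=
  (1 / 2) * ((p₁ + p₂) / (p₁ - p₂) + (p₂ + p₃) / (p₂ - p₃) + (p₃ + p₁) / (p₃ - p₁))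

def K (p₁ p₂ p₃ : ℝ) : ℝ := p₁ * p₂ / (p₁ - p₂) + p₂ * p₃ / (p₂ - p₃) + p₃ * p₁ / (p₃ - p₁)

variable {p p₁ p₂ : ℝ}

theorem J_zero_eq (h₁ : p₁ ≠ 0) (h₂ : p₂ ≠ 0) : J p₁ p₂ 0 = 1 / 2 * ((p₁ + p₂) / (p₁ - p₂)) := by
  simp only [J, add_zero, sub_zero, zero_add, zero_sub, div_self h₂, div_neg, div_self h₁]
  ring

theorem J_zero_eq_zero_iff (h₁₂ : p₁ ≠ p₂) (h₁ : p₁ ≠ 0) (h₂ : p₂ ≠ 0) :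
    J p₁ p₂ 0 = 0 ↔ p₂ = -p₁ := by
  rw [J_zero_eq h₁ h₂, mul_eq_zero, or_iff_right (by norm_num), div_eq_zero_iff,
    or_iff_left (sub_ne_zero.mpr h₁₂), add_comm, add_eq_zero_iff_eq_neg]

theorem I_neg_zero (h : p ≠ 0) : I p (-p) 0 = -3 / (2 * p) := by
  simp only [I, sub_neg_eq_add, ← two_mul, sub_zero, zero_sub]
  field_simp
  ring

theorem K_neg_zero (h : p ≠ 0) : K p (-p) 0 = -p / 2 := by
  simp only [K, mul_zero, zero_mul, zero_div, add_zero, sub_neg_eq_add, ← two_mul]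
  field_simp

theorem I_neg_zero_eq_K_iff (h : p ≠ 0) : I p (-p) 0 = K p (-p) 0 ↔ p ^ 2 = 3 := by
  rw [I_neg_zero h, K_neg_zero h, div_eq_div_iff (mul_ne_zero two_ne_zero h) two_ne_zero]
  constructor <;> intro h'
  · linear_combination (1 / 2 : ℝ) * h'
  · linear_combination (2 : ℝ) * h'

end IdealTriangle

end

theorem eq_neg_and_sq_eq_three_iff {p₁ p₂ : ℝ} :
    p₂ = -p₁ ∧ p₁ ^ 2 = 3 ↔
      (p₁ = Real.sqrt 3 ∧ p₂ = -Real.sqrt 3) ∨ (p₁ = -Real.sqrt 3 ∧ p₂ = Real.sqrt 3) := by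
  constructor
  · rintro ⟨rfl, h⟩
    rcases sq_eq_sq_iff_eq_or_eq_neg.1 (h.trans (Real.sq_sqrt zero_le_three).symm) with rfl | rfl
    · exact Or.inl ⟨rfl, rfl⟩
    · exact Or.inr ⟨rfl, neg_neg _⟩
  · rintro (⟨rfl, rfl⟩ | ⟨rfl, rfl⟩) <;> simp

open IdealTriangle in
/-- An ideal triangle normalized with `p₃ = 0` has hyperbolic barycenter at the origin
(`J = 0` and `I = K`) precisely for `{p₁, p₂} = {√3, -√3}`, i.e. exactly the rotations
about the origin of the regular ideal triangle. -/
theorem stmt_9 (p₁ p₂ p₃ I J K : ℝ)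
    (h12 : p₁ ≠ p₂) (h23 : p₂ ≠ p₃) (h31 : p₃ ≠ p₁) (hp3 : p₃ = 0)
    (hI : I = 1 / (p₁ - p₂) + 1 / (p₂ - p₃) + 1 / (p₃ - p₁))
    (hJ : J = (1 / 2) * ((p₁ + p₂) / (p₁ - p₂) + (p₂ + p₃) / (p₂ - p₃) + (p₃ + p₁) / (p₃ - p₁)))
    (hK : K = p₁ * p₂ / (p₁ - p₂) + p₂ * p₃ / (p₂ - p₃) + p₃ * p₁ / (p₃ - p₁)) :
    (J = 0 ∧ I = K) ↔
      ((p₁ = Real.sqrt 3 ∧ p₂ = -Real.sqrt 3) ∨ (p₁ = -Real.sqrt 3 ∧ p₂ = Real.sqrt 3)) := by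
  subst hp3 hI hJ hK
  have h₁ : p₁ ≠ 0 := h31.symm
  have h₂ : p₂ ≠ 0 := h23
  change J p₁ p₂ 0 = 0 ∧ I p₁ p₂ 0 = K p₁ p₂ 0 ↔ _
  rw [J_zero_eq_zero_iff h12 h₁ h₂, ← eq_neg_and_sq_eq_three_iff]
  exact and_congr_right fun h₂₁ => h₂₁ ▸ I_neg_zero_eq_K_iff h₁
end

section
/- For 0 ≤ r < 1, set p₁ = √(3(1-r)/(1+r)), p₂ = -p₁, p₃ = 0, and p̂₁ = -p₁/3, p̂₂ = p₁/3, p̂₃ = ∞. Then the six pole points P₁* = ((r-2)/(1-2r), 0), P₂* = (1, -p₁), P₃* = (1, p₁), P̂₁* = ((r+2)/(2r+1), 0), P̂₂* = (-1, 3/p₁), P̂₃* = (-1, -3/p₁) all lie on the conic (1-4r²)x² + 6rx + (1-r²)y² + r² - 4 = 0 (assuming r ≠ 1/2 and p₁ ≠ 0 where needed). -/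
/-!
On the `x`-axis the conic factors as `((1 - 2r)x - (r - 2)) * ((1 + 2r)x - (r + 2)) = 0`, and on
the lines `x = ±1` it is `(1 ± r)` times a linear condition on `y²`; both conditions are
equivalent to `(1 + r) p₁² = 3 (1 - r)` for `y = p₁` and `y = 3 / p₁` respectively.
-/

/-- A point `(x,y)` lies on the Poncelet conic `Γ(r,0)`. -/
def onGamma (r x y : ℝ) : Prop :=
  (1 - 4 * r ^ 2) * x ^ 2 + 6 * r * x + (1 - r ^ 2) * y ^ 2 + r ^ 2 - 4 = 0

section

variable {r x y : ℝ}

theorem onGamma_neg_iff : onGamma r x (-y) ↔ onGamma r x y := by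
  rw [onGamma, onGamma, neg_sq]

theorem onGamma_zero_iff :
    onGamma r x 0 ↔ (1 - 2 * r) * x = r - 2 ∨ (1 + 2 * r) * x = r + 2 := by
  rw [← sub_eq_zero, ← sub_eq_zero (a := (1 + 2 * r) * x), ← mul_eq_zero, onGamma]
  constructor <;> intro h <;> linear_combination h

theorem onGamma_one_of_mul_sq (h : (1 + r) * y ^ 2 = 3 * (1 - r)) : onGamma r 1 y := by
  unfold onGamma
  linear_combination (1 - r) * h

theorem onGamma_neg_one_of_mul_sq (h : (1 - r) * y ^ 2 = 3 * (1 + r)) : onGamma r (-1) y := by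
  unfold onGamma
  linear_combination (1 + r) * h

end

/-- The six poles of the sides of the two special ideal triangles with hyperbolic
barycenter `(r,0)` all lie on the conic `(1-4r²)x² + 6rx + (1-r²)y² + r² - 4 = 0`. -/
theorem stmt_10 (r p₁ : ℝ) (hr0 : 0 ≤ r) (hr1 : r < 1) (hrhalf : r ≠ 1 / 2)
    (hp₁ : p₁ = Real.sqrt (3 * (1 - r) / (1 + r))) (hp₁0 : p₁ ≠ 0) :
    onGamma r ((r - 2) / (1 - 2 * r)) 0 ∧
    onGamma r 1 (-p₁) ∧
    onGamma r 1 p₁ ∧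
    onGamma r ((r + 2) / (2 * r + 1)) 0 ∧
    onGamma r (-1) (3 / p₁) ∧
    onGamma r (-1) (-(3 / p₁)) := by
  have hsq : (1 + r) * p₁ ^ 2 = 3 * (1 - r) := by
    rw [hp₁, Real.sq_sqrt (div_nonneg (by linarith) (by linarith))]
    field_simp
  have hsq' : (1 - r) * (3 / p₁) ^ 2 = 3 * (1 + r) := by
    field_simp
    linear_combination -hsq
  have hP₁ : (1 - 2 * r) * ((r - 2) / (1 - 2 * r)) = r - 2 :=
    mul_div_cancel₀ _ (by contrapose! hrhalf; linarith)
  have hPhat₁ : (1 + 2 * r) * ((r + 2) / (2 * r + 1)) = r + 2 := by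
    rw [add_comm (2 * r)]
    exact mul_div_cancel₀ _ (by positivity)
  exact ⟨onGamma_zero_iff.2 (.inl hP₁), onGamma_neg_iff.2 (onGamma_one_of_mul_sq hsq),
    onGamma_one_of_mul_sq hsq, onGamma_zero_iff.2 (.inr hPhat₁),
    onGamma_neg_one_of_mul_sq hsq', onGamma_neg_iff.2 (onGamma_neg_one_of_mul_sq hsq')⟩
end

section
/- Let Γ be an ellipse centered at the origin with axes along the coordinate axes, circumscribing the unit circle, such that the Poncelet map between Γ and the unit circle is 4-periodic. Then every quadrilateral circuminscribed in (Γ, unit circle) (vertices on Γ, sides tangent to the unit circle) is a rhombus centered at the origin, i.e., its vertices satisfy Q₃ = -Q₁ and Q₄ = -Q₂. -/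
/-- A point lies on the axis-aligned central ellipse with semi-axes `a`, `b`. -/
def OnEllipse (a b : ℝ) (P : ℝ × ℝ) : Prop := P.1 ^ 2 / a ^ 2 + P.2 ^ 2 / b ^ 2 = 1

/-- The chord through `A ≠ B` is tangent to the unit circle: it is the polar line
`{X : u·X = 1}` of some unit vector `u`. -/
def TangentChord (A B : ℝ × ℝ) : Prop :=
  A ≠ B ∧ ∃ u : ℝ × ℝ, u.1 ^ 2 + u.2 ^ 2 = 1 ∧
    u.1 * A.1 + u.2 * A.2 = 1 ∧ u.1 * B.1 + u.2 * B.2 = 1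

/-- A sum of two squares vanishes iff each term does. -/
lemma aux_sq_sum_zero {x y : ℝ} (h : x ^ 2 + y ^ 2 = 0) : x = 0 ∧ y = 0 :=
  ⟨by nlinarith [sq_nonneg x, sq_nonneg y], by nlinarith [sq_nonneg x, sq_nonneg y]⟩


lemma aux_one_le_sq {x : ℝ} (h : 1 ≤ x) : 1 ≤ x ^ 2 := by nlinarith

lemma aux_Apos {a b : ℝ} (ha : 1 ≤ a) (hb : 1 ≤ b) :
    0 < a ^ 2 * b ^ 2 + a ^ 2 - b ^ 2 := by
  have ha2 := aux_one_le_sq ha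
  have hb2 := aux_one_le_sq hb
  nlinarith

lemma aux_Bpos {a b : ℝ} (ha : 1 ≤ a) (hb : 1 ≤ b) :
    0 < a ^ 2 * b ^ 2 - a ^ 2 + b ^ 2 := by
  have ha2 := aux_one_le_sq ha
  have hb2 := aux_one_le_sq hb
  nlinarith

lemma aux_c2pos {a b u1 u2 : ℝ} (ha : 1 ≤ a) (hb : 1 ≤ b) (hu : u1 ^ 2 + u2 ^ 2 = 1) :
    0 < b ^ 2 * u2 ^ 2 + a ^ 2 * u1 ^ 2 := by
  have ha2 := aux_one_le_sq ha
  have hb2 := aux_one_le_sq hb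
  nlinarith [sq_nonneg u1, sq_nonneg u2]

lemma aux_clear {a b x y : ℝ} (ha : a ≠ 0) (hb : b ≠ 0)
    (h : x ^ 2 / a ^ 2 + y ^ 2 / b ^ 2 = 1) :
    b ^ 2 * x ^ 2 + a ^ 2 * y ^ 2 = a ^ 2 * b ^ 2 := by
  field_simp at h
  linear_combination h

/-- Two unit vectors with vanishing cross product are equal or opposite. -/
lemma aux_unit_parallel {u1 u2 v1 v2 : ℝ} (hu : u1 ^ 2 + u2 ^ 2 = 1)
    (hv : v1 ^ 2 + v2 ^ 2 = 1) (h : u1 * v2 - u2 * v1 = 0) :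
    (u1 = v1 ∧ u2 = v2) ∨ (u1 = -v1 ∧ u2 = -v2) := by
  have hs : ((u1 * v1 + u2 * v2) - 1) * ((u1 * v1 + u2 * v2) + 1) = 0 := by
    linear_combination (v1 ^ 2 + v2 ^ 2) * hu + hv - (u1 * v2 - u2 * v1) * h
  rcases mul_eq_zero.mp hs with hs | hs
  · left
    have h0 : (u1 - v1) ^ 2 + (u2 - v2) ^ 2 = 0 := by linear_combination hu + hv - 2 * hs
    obtain ⟨h1, h2⟩ := aux_sq_sum_zero h0
    exact ⟨by linarith, by linarith⟩
  · right
    have h0 : (u1 + v1) ^ 2 + (u2 + v2) ^ 2 = 0 := by linear_combination hu + hv + 2 * hs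
    obtain ⟨h1, h2⟩ := aux_sq_sum_zero h0
    exact ⟨by linarith, by linarith⟩

/-- A nonsingular 2×2 homogeneous linear system has only the zero solution. -/
lemma aux_solve2 {u1 u2 v1 v2 x y : ℝ} (h1 : u1 * x + u2 * y = 0)
    (h2 : v1 * x + v2 * y = 0) (hD : u1 * v2 - u2 * v1 ≠ 0) : x = 0 ∧ y = 0 := by
  constructor
  · have hx : (u1 * v2 - u2 * v1) * x = 0 := by linear_combination v2 * h1 - u2 * h2
    exact (mul_eq_zero.mp hx).resolve_left hD
  · have hy : (u1 * v2 - u2 * v1) * y = 0 := by linear_combination u1 * h2 - v1 * h1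
    exact (mul_eq_zero.mp hy).resolve_left hD

/-- If two vectors are both orthogonal to a nonzero vector in the plane,
their cross product vanishes. -/
lemma aux_cross {p1 p2 q1 q2 x y : ℝ} (h1 : p1 * x + p2 * y = 0)
    (h2 : q1 * x + q2 * y = 0) (hxy : ¬(x = 0 ∧ y = 0)) :
    p1 * q2 - p2 * q1 = 0 := by
  have hx : (p1 * q2 - p2 * q1) * x = 0 := by linear_combination q2 * h1 - p2 * h2
  have hy : (p1 * q2 - p2 * q1) * y = 0 := by linear_combination p1 * h2 - q1 * h1
  by_contra hc
  exact hxy ⟨(mul_eq_zero.mp hx).resolve_left hc, (mul_eq_zero.mp hy).resolve_left hc⟩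

set_option maxHeartbeats 1000000 in
/-- A line tangent to the unit circle meets the ellipse in at most two points:
any third incidence point coincides with one of two given distinct ones. -/
lemma aux_chord3 {a b u1 u2 p1 p2 q1 q2 r1 r2 : ℝ} (ha : 1 ≤ a) (hb : 1 ≤ b)
    (hu : u1 ^ 2 + u2 ^ 2 = 1)
    (hpE : b ^ 2 * p1 ^ 2 + a ^ 2 * p2 ^ 2 = a ^ 2 * b ^ 2)
    (hqE : b ^ 2 * q1 ^ 2 + a ^ 2 * q2 ^ 2 = a ^ 2 * b ^ 2)
    (hrE : b ^ 2 * r1 ^ 2 + a ^ 2 * r2 ^ 2 = a ^ 2 * b ^ 2)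
    (hp : u1 * p1 + u2 * p2 = 1) (hq : u1 * q1 + u2 * q2 = 1)
    (hr : u1 * r1 + u2 * r2 = 1) (hpq : ¬(p1 = q1 ∧ p2 = q2)) :
    (r1 = p1 ∧ r2 = p2) ∨ (r1 = q1 ∧ r2 = q2) := by
  set tP := -u2 * p1 + u1 * p2 with htP
  set tQ := -u2 * q1 + u1 * q2 with htQ
  set tR := -u2 * r1 + u1 * r2 with htR
  have cp1 : p1 = u1 - tP * u2 := by rw [htP]; linear_combination u1 * hp - p1 * hu
  have cp2 : p2 = u2 + tP * u1 := by rw [htP]; linear_combination u2 * hp - p2 * hu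
  have cq1 : q1 = u1 - tQ * u2 := by rw [htQ]; linear_combination u1 * hq - q1 * hu
  have cq2 : q2 = u2 + tQ * u1 := by rw [htQ]; linear_combination u2 * hq - q2 * hu
  have cr1 : r1 = u1 - tR * u2 := by rw [htR]; linear_combination u1 * hr - r1 * hu
  have cr2 : r2 = u2 + tR * u1 := by rw [htR]; linear_combination u2 * hr - r2 * hu
  set c2 := b ^ 2 * u2 ^ 2 + a ^ 2 * u1 ^ 2 with hc2
  set c1 := 2 * u1 * u2 * (a ^ 2 - b ^ 2) with hc1
  set c0 := b ^ 2 * u1 ^ 2 + a ^ 2 * u2 ^ 2 - a ^ 2 * b ^ 2 with hc0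
  have hc2pos : 0 < c2 := by rw [hc2]; exact aux_c2pos ha hb hu
  have eP : c2 * tP ^ 2 + c1 * tP + c0 = 0 := by
    rw [hc2, hc1, hc0]
    linear_combination hpE - b ^ 2 * (p1 + u1 - tP * u2) * cp1 -
      a ^ 2 * (p2 + u2 + tP * u1) * cp2
  have eQ : c2 * tQ ^ 2 + c1 * tQ + c0 = 0 := by
    rw [hc2, hc1, hc0]
    linear_combination hqE - b ^ 2 * (q1 + u1 - tQ * u2) * cq1 -
      a ^ 2 * (q2 + u2 + tQ * u1) * cq2
  have eR : c2 * tR ^ 2 + c1 * tR + c0 = 0 := by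
    rw [hc2, hc1, hc0]
    linear_combination hrE - b ^ 2 * (r1 + u1 - tR * u2) * cr1 -
      a ^ 2 * (r2 + u2 + tR * u1) * cr2
  have htPQ : tP ≠ tQ := by
    intro h
    exact hpq ⟨by rw [cp1, cq1, h], by rw [cp2, cq2, h]⟩
  have hfac0 : (tP - tQ) * (c2 * (tP + tQ) + c1) = 0 := by linear_combination eP - eQ
  have hs : c2 * (tP + tQ) + c1 = 0 :=
    (mul_eq_zero.mp hfac0).resolve_left (sub_ne_zero.mpr htPQ)
  have hm : c2 * (c2 * (tP * tQ) - c0) = 0 := by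
    linear_combination (c2 * tP) * hs - c2 * eP
  have hm' : c2 * (tP * tQ) - c0 = 0 := (mul_eq_zero.mp hm).resolve_left (ne_of_gt hc2pos)
  have key : c2 * (c2 * ((tR - tP) * (tR - tQ))) = 0 := by
    linear_combination c2 * eR - c2 * tR * hs + c2 * hm'
  have key2 : (tR - tP) * (tR - tQ) = 0 := by
    have h1 := (mul_eq_zero.mp key).resolve_left (ne_of_gt hc2pos)
    exact (mul_eq_zero.mp h1).resolve_left (ne_of_gt hc2pos)
  rcases mul_eq_zero.mp key2 with h | h
  · have ht : tR = tP := by linarith [sub_eq_zero.mp h]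
    exact Or.inl ⟨by rw [cr1, cp1, ht], by rw [cr2, cp2, ht]⟩
  · have ht : tR = tQ := by linarith [sub_eq_zero.mp h]
    exact Or.inr ⟨by rw [cr1, cq1, ht], by rw [cr2, cq2, ht]⟩

set_option maxHeartbeats 1000000 in
/-- The key bilinear relation between the tangency poles of the two tangent chords
through a common vertex on the ellipse. -/
lemma aux_keyrel {a b u1 u2 v1 v2 x y : ℝ}
    (hu : u1 ^ 2 + u2 ^ 2 = 1) (hv : v1 ^ 2 + v2 ^ 2 = 1)
    (h1 : u1 * x + u2 * y = 1) (h2 : v1 * x + v2 * y = 1)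
    (hE : b ^ 2 * x ^ 2 + a ^ 2 * y ^ 2 = a ^ 2 * b ^ 2)
    (hne : ¬(u1 = v1 ∧ u2 = v2)) :
    (a ^ 2 * b ^ 2 + a ^ 2 - b ^ 2) * (u1 * v1) +
      (a ^ 2 * b ^ 2 - a ^ 2 + b ^ 2) * (u2 * v2) = a ^ 2 + b ^ 2 - a ^ 2 * b ^ 2 := by
  have hD : u1 * v2 - u2 * v1 ≠ 0 := by
    intro h
    rcases aux_unit_parallel hu hv h with h' | h'
    · exact hne h'
    · obtain ⟨e1, e2⟩ := h'
      rw [e1, e2] at h1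
      have : (0 : ℝ) = 2 := by linarith [h1, h2]
      norm_num at this
  set D := u1 * v2 - u2 * v1 with hDdef
  have e1 : x * D = v2 - u2 := by rw [hDdef]; linear_combination v2 * h1 - u2 * h2
  have e2 : y * D = u1 - v1 := by rw [hDdef]; linear_combination u1 * h2 - v1 * h1
  have he2 : b ^ 2 * (v2 - u2) ^ 2 + a ^ 2 * (u1 - v1) ^ 2 = a ^ 2 * b ^ 2 * D ^ 2 := by
    linear_combination (-(b ^ 2) * (x * D + v2 - u2)) * e1 +
      (-(a ^ 2) * (y * D + u1 - v1)) * e2 + D ^ 2 * hE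
  have key0 : ((u1 * v1 + u2 * v2) - 1) *
      ((a ^ 2 * b ^ 2 + a ^ 2 - b ^ 2) * (u1 * v1) +
        (a ^ 2 * b ^ 2 - a ^ 2 + b ^ 2) * (u2 * v2) - (a ^ 2 + b ^ 2 - a ^ 2 * b ^ 2)) = 0 := by
    rw [hDdef] at he2
    linear_combination he2 +
      (a ^ 2 * b ^ 2 * (v1 ^ 2 + v2 ^ 2) + (b ^ 2 - a ^ 2) * v2 ^ 2 - b ^ 2) * hu +
      (a ^ 2 * b ^ 2 + (a ^ 2 - b ^ 2) * u1 ^ 2 - a ^ 2) * hv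
  have hS : (u1 * v1 + u2 * v2) - 1 ≠ 0 := by
    intro h
    have h0 : (u1 - v1) ^ 2 + (u2 - v2) ^ 2 = 0 := by linear_combination hu + hv - 2 * h
    obtain ⟨h1', h2'⟩ := aux_sq_sum_zero h0
    exact hne ⟨by linarith, by linarith⟩
  have := (mul_eq_zero.mp key0).resolve_left hS
  linarith [sub_eq_zero.mp this]

set_option maxHeartbeats 1000000 in
/-- If `Γ` is a central (axis-aligned) ellipse circumscribing the unit circle such that
the Poncelet map between `Γ` and the unit circle is `4`-periodic (every non-backtracking
Poncelet trajectory closes after 4 steps), then every quadrilateral circuminscribed in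
`(Γ, unit circle)` is a rhombus centered at the origin: `Q₃ = -Q₁` and `Q₄ = -Q₂`. -/
theorem stmt_12 (a b : ℝ) (ha : 1 ≤ a) (hb : 1 ≤ b)
    (hper : ∀ A B C D E : ℝ × ℝ,
      OnEllipse a b A → OnEllipse a b B → OnEllipse a b C → OnEllipse a b D →
        OnEllipse a b E →
      TangentChord A B → TangentChord B C → TangentChord C D → TangentChord D E →
      C ≠ A → D ≠ B → E ≠ C → E = A)
    (Q₁ Q₂ Q₃ Q₄ : ℝ × ℝ)
    (hQ₁ : OnEllipse a b Q₁) (hQ₂ : OnEllipse a b Q₂)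
    (hQ₃ : OnEllipse a b Q₃) (hQ₄ : OnEllipse a b Q₄)
    (h12 : TangentChord Q₁ Q₂) (h23 : TangentChord Q₂ Q₃)
    (h34 : TangentChord Q₃ Q₄) (h41 : TangentChord Q₄ Q₁)
    (hd13 : Q₃ ≠ Q₁) (hd24 : Q₄ ≠ Q₂) :
    Q₃ = -Q₁ ∧ Q₄ = -Q₂ := by
  have ha0 : (a : ℝ) ≠ 0 := by positivity
  have hb0 : (b : ℝ) ≠ 0 := by positivity
  -- clear denominators in the ellipse equations
  have hE : ∀ P : ℝ × ℝ, OnEllipse a b P →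
      b ^ 2 * P.1 ^ 2 + a ^ 2 * P.2 ^ 2 = a ^ 2 * b ^ 2 :=
    fun P hP => aux_clear ha0 hb0 hP
  have hE1 := hE Q₁ hQ₁
  have hE2 := hE Q₂ hQ₂
  have hE3 := hE Q₃ hQ₃
  have hE4 := hE Q₄ hQ₄
  obtain ⟨hne12, u, hu, hu1, hu2⟩ := h12
  obtain ⟨hne23, v, hv, hv2, hv3⟩ := h23
  obtain ⟨hne34, w, hw, hw3, hw4⟩ := h34
  obtain ⟨hne41, z, hz, hz4, hz1⟩ := h41
  -- pair inequalities in coordinates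
  have pne : ∀ P R : ℝ × ℝ, P ≠ R → ¬(P.1 = R.1 ∧ P.2 = R.2) := by
    intro P R h hc
    exact h (Prod.ext hc.1 hc.2)
  have peq : ∀ P R : ℝ × ℝ, (P.1 = R.1 ∧ P.2 = R.2) → P = R := fun P R h => Prod.ext h.1 h.2
  have hne12' := pne _ _ hne12
  have hne23' := pne _ _ hne23
  have hne34' := pne _ _ hne34
  have hne41' := pne _ _ hne41
  have hd13' := pne _ _ hd13
  have hd24' := pne _ _ hd24
  -- u ≠ w : otherwise Q₁, Q₂, Q₃ lie on the tangent line of u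
  have huw : ¬(u.1 = w.1 ∧ u.2 = w.2) := by
    rintro ⟨e1, e2⟩
    have hw3' : u.1 * Q₃.1 + u.2 * Q₃.2 = 1 := by rw [e1, e2]; exact hw3
    rcases aux_chord3 ha hb hu hE1 hE2 hE3 hu1 hu2 hw3' hne12' with h | h
    · exact hd13' h
    · exact hne23' ⟨h.1.symm, h.2.symm⟩
  -- u ≠ v, v ≠ w, w ≠ z, z ≠ u
  have huv : ¬(u.1 = v.1 ∧ u.2 = v.2) := by
    rintro ⟨e1, e2⟩
    have hv3' : u.1 * Q₃.1 + u.2 * Q₃.2 = 1 := by rw [e1, e2]; exact hv3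
    rcases aux_chord3 ha hb hu hE1 hE2 hE3 hu1 hu2 hv3' hne12' with h | h
    · exact hd13' h
    · exact hne23' ⟨h.1.symm, h.2.symm⟩
  have hvw : ¬(v.1 = w.1 ∧ v.2 = w.2) := by
    rintro ⟨e1, e2⟩
    have hw4' : v.1 * Q₄.1 + v.2 * Q₄.2 = 1 := by rw [e1, e2]; exact hw4
    rcases aux_chord3 ha hb hv hE2 hE3 hE4 hv2 hv3 hw4' hne23' with h | h
    · exact hd24' h
    · exact hne34' ⟨h.1.symm, h.2.symm⟩
  have hwz : ¬(w.1 = z.1 ∧ w.2 = z.2) := by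
    rintro ⟨e1, e2⟩
    have hz1' : w.1 * Q₁.1 + w.2 * Q₁.2 = 1 := by rw [e1, e2]; exact hz1
    rcases aux_chord3 ha hb hw hE3 hE4 hE1 hw3 hw4 hz1' hne34' with h | h
    · exact hd13' ⟨h.1.symm, h.2.symm⟩
    · exact hne41' ⟨h.1.symm, h.2.symm⟩
  have hzu : ¬(z.1 = u.1 ∧ z.2 = u.2) := by
    rintro ⟨e1, e2⟩
    have hu2' : z.1 * Q₂.1 + z.2 * Q₂.2 = 1 := by rw [e1, e2]; exact hu2
    rcases aux_chord3 ha hb hz hE4 hE1 hE2 hz4 hz1 hu2' hne41' with h | h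
    · exact hd24' ⟨h.1.symm, h.2.symm⟩
    · exact hne12' ⟨h.1.symm, h.2.symm⟩
  -- the four key bilinear relations
  have Ruv := aux_keyrel (a := a) (b := b) hu hv hu2 hv2 hE2 huv
  have Rvw := aux_keyrel (a := a) (b := b) hv hw hv3 hw3 hE3 hvw
  have Rwz := aux_keyrel (a := a) (b := b) hw hz hw4 hz4 hE4 hwz
  have Rzu := aux_keyrel (a := a) (b := b) hz hu hz1 hu1 hE1 hzu
  set A := a ^ 2 * b ^ 2 + a ^ 2 - b ^ 2 with hA
  set B := a ^ 2 * b ^ 2 - a ^ 2 + b ^ 2 with hB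
  have hApos : 0 < A := by rw [hA]; exact aux_Apos ha hb
  have hBpos : 0 < B := by rw [hB]; exact aux_Bpos ha hb
  -- u - w ≠ 0
  have huw0 : ¬(u.1 - w.1 = 0 ∧ u.2 - w.2 = 0) := by
    rintro ⟨e1, e2⟩
    exact huw ⟨by linarith, by linarith⟩
  -- v and z are parallel
  have A1 : (A * v.1) * (u.1 - w.1) + (B * v.2) * (u.2 - w.2) = 0 := by
    linear_combination Ruv - Rvw
  have A2 : (A * z.1) * (u.1 - w.1) + (B * z.2) * (u.2 - w.2) = 0 := by
    linear_combination Rzu - Rwz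
  have hcross1 : (A * v.1) * (B * z.2) - (B * v.2) * (A * z.1) = 0 :=
    aux_cross A1 A2 huw0
  have hvz0 : v.1 * z.2 - v.2 * z.1 = 0 := by
    have hAB : A * B ≠ 0 := by positivity
    have : (A * B) * (v.1 * z.2 - v.2 * z.1) = 0 := by linear_combination hcross1
    exact (mul_eq_zero.mp this).resolve_left hAB
  -- z = -v  (z = v is excluded)
  have hzv : z.1 = -v.1 ∧ z.2 = -v.2 := by
    rcases aux_unit_parallel hv hz (by linarith [hvz0]) with h | h
    · exfalso
      have hz4' : v.1 * Q₄.1 + v.2 * Q₄.2 = 1 := by rw [h.1, h.2]; exact hz4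
      rcases aux_chord3 ha hb hv hE2 hE3 hE4 hv2 hv3 hz4' hne23' with h' | h'
      · exact hd24' h'
      · exact hne34' ⟨h'.1.symm, h'.2.symm⟩
    · exact ⟨by linarith [h.1], by linarith [h.2]⟩
  -- v - z ≠ 0
  have hvz1 : ¬(v.1 - z.1 = 0 ∧ v.2 - z.2 = 0) := by
    rintro ⟨e1, e2⟩
    have hv0 : v.1 = 0 := by linarith [hzv.1]
    have hv0' : v.2 = 0 := by linarith [hzv.2]
    rw [hv0, hv0'] at hv
    norm_num at hv
  -- w and u are parallel, so w = -u
  have B1 : (A * w.1) * (v.1 - z.1) + (B * w.2) * (v.2 - z.2) = 0 := by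
    linear_combination Rvw - Rwz
  have B2 : (A * u.1) * (v.1 - z.1) + (B * u.2) * (v.2 - z.2) = 0 := by
    linear_combination Ruv - Rzu
  have hcross2 : (A * w.1) * (B * u.2) - (B * w.2) * (A * u.1) = 0 :=
    aux_cross B1 B2 hvz1
  have hwu0 : w.1 * u.2 - w.2 * u.1 = 0 := by
    have hAB : A * B ≠ 0 := by positivity
    have : (A * B) * (w.1 * u.2 - w.2 * u.1) = 0 := by linear_combination hcross2
    exact (mul_eq_zero.mp this).resolve_left hAB
  have hwu : w.1 = -u.1 ∧ w.2 = -u.2 := by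
    rcases aux_unit_parallel hw hu (by linarith [hwu0]) with h | h
    · exact absurd ⟨h.1.symm, h.2.symm⟩ huw
    · exact ⟨by linarith [h.1], by linarith [h.2]⟩
  -- u and v are independent
  have hDuv : u.1 * v.2 - u.2 * v.1 ≠ 0 := by
    intro h
    rcases aux_unit_parallel hu hv h with h' | h'
    · exact huv h'
    · rw [h'.1, h'.2] at hu2
      have : (0 : ℝ) = 2 := by linarith [hu2, hv2]
      norm_num at this
  -- conclude Q₃ = -Q₁
  have s1 : u.1 * (Q₁.1 + Q₃.1) + u.2 * (Q₁.2 + Q₃.2) = 0 := by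
    have huQ3 : w.1 * Q₃.1 + w.2 * Q₃.2 = 1 := hw3
    rw [hwu.1, hwu.2] at huQ3
    linear_combination hu1 - huQ3
  have s2 : v.1 * (Q₁.1 + Q₃.1) + v.2 * (Q₁.2 + Q₃.2) = 0 := by
    have hvQ1 : z.1 * Q₁.1 + z.2 * Q₁.2 = 1 := hz1
    rw [hzv.1, hzv.2] at hvQ1
    linear_combination hv3 - hvQ1
  obtain ⟨e1, e2⟩ := aux_solve2 s1 s2 hDuv
  have s3 : u.1 * (Q₂.1 + Q₄.1) + u.2 * (Q₂.2 + Q₄.2) = 0 := by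
    have huQ4 : w.1 * Q₄.1 + w.2 * Q₄.2 = 1 := hw4
    rw [hwu.1, hwu.2] at huQ4
    linear_combination hu2 - huQ4
  have s4 : v.1 * (Q₂.1 + Q₄.1) + v.2 * (Q₂.2 + Q₄.2) = 0 := by
    have hvQ4 : z.1 * Q₄.1 + z.2 * Q₄.2 = 1 := hz4
    rw [hzv.1, hzv.2] at hvQ4
    linear_combination hv2 - hvQ4
  obtain ⟨e3, e4⟩ := aux_solve2 s3 s4 hDuv
  constructor
  · refine Prod.ext ?_ ?_ <;> simp only [Prod.fst_neg, Prod.snd_neg] <;> linarith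
  · refine Prod.ext ?_ ?_ <;> simp only [Prod.fst_neg, Prod.snd_neg] <;> linarith
end

section
/- Let (p₁, p₂, p₃, p₄) be an ideal quadrilateral. Its hyperbolic barycenter equals (0,0) (i.e., I = K and J = 0) if and only if the corresponding Euclidean inscribed quadrilateral with vertices Pₗ = ((1-pₗ²)/(1+pₗ²), 2pₗ/(1+pₗ²)) is a rectangle. -/
/-- `circlePt b` is the antipode of `circlePt a` iff `a * b = -1`. -/
lemma antipode_iff (a b : ℝ) : circlePt b = -circlePt a ↔ a * b = -1 := by
  have ha : (1:ℝ) + a ^ 2 ≠ 0 := by positivity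
  have hb : (1:ℝ) + b ^ 2 ≠ 0 := by positivity
  simp only [circlePt, Prod.ext_iff, Prod.fst_neg, Prod.snd_neg]
  constructor
  · rintro ⟨h1, h2⟩
    rw [neg_div'] at h1 h2
    rw [div_eq_div_iff hb ha] at h1 h2
    have hsq : (a*b - 1) * (a*b + 1) = 0 := by linear_combination (-1/2) * h1
    have hs : (a + b) * (a*b + 1) = 0 := by linear_combination (1/2) * h2
    rcases mul_eq_zero.mp hsq with h' | h'
    · exfalso
      have hab : a * b = 1 := by linarith
      have : a + b = 0 := by
        rcases mul_eq_zero.mp hs with h'' | h''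
        · exact h''
        · nlinarith
      nlinarith [sq_nonneg a, sq_nonneg b]
    · linarith
  · intro h
    have ha0 : a ≠ 0 := by rintro rfl; simp at h
    constructor
    · rw [neg_div', div_eq_div_iff hb ha]
      linear_combination (-2*(a*b - 1)) * h
    · rw [neg_div', div_eq_div_iff hb ha]
      linear_combination (2*(a+b)) * h

/-- The hyperbolic barycenter of an ideal quadrilateral is the origin (`I = K` and `J = 0`)
if and only if the corresponding inscribed Euclidean quadrilateral is a rectangle
(its diagonals are diameters: `P₃ = -P₁` and `P₄ = -P₂`). -/
theorem stmt_13 (p₁ p₂ p₃ p₄ I J K : ℝ)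
    (h12 : p₁ ≠ p₂) (h13 : p₁ ≠ p₃) (h14 : p₁ ≠ p₄)
    (h23 : p₂ ≠ p₃) (h24 : p₂ ≠ p₄) (h34 : p₃ ≠ p₄)
    (hI : I = 1 / (p₁ - p₂) + 1 / (p₂ - p₃) + 1 / (p₃ - p₄) + 1 / (p₄ - p₁))
    (hJ : J = (1 / 2) * ((p₁ + p₂) / (p₁ - p₂) + (p₂ + p₃) / (p₂ - p₃)
        + (p₃ + p₄) / (p₃ - p₄) + (p₄ + p₁) / (p₄ - p₁)))
    (hK : K = p₁ * p₂ / (p₁ - p₂) + p₂ * p₃ / (p₂ - p₃)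
        + p₃ * p₄ / (p₃ - p₄) + p₄ * p₁ / (p₄ - p₁)) :
    (I = K ∧ J = 0) ↔ (circlePt p₃ = -circlePt p₁ ∧ circlePt p₄ = -circlePt p₂) := by
  rw [antipode_iff, antipode_iff]
  have d12 : p₁ - p₂ ≠ 0 := sub_ne_zero.mpr h12
  have d13 : p₁ - p₃ ≠ 0 := sub_ne_zero.mpr h13
  have d23 : p₂ - p₃ ≠ 0 := sub_ne_zero.mpr h23
  have d24 : p₂ - p₄ ≠ 0 := sub_ne_zero.mpr h24
  have d34 : p₃ - p₄ ≠ 0 := sub_ne_zero.mpr h34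
  have d41 : p₄ - p₁ ≠ 0 := sub_ne_zero.mpr (Ne.symm h14)
  have hD : (p₁-p₂)*(p₂-p₃)*(p₃-p₄)*(p₄-p₁) ≠ 0 := by
    exact mul_ne_zero (mul_ne_zero (mul_ne_zero d12 d23) d34) d41
  have e1 : (I - K) * ((p₁-p₂)*(p₂-p₃)*(p₃-p₄)*(p₄-p₁))
      = (p₁-p₃)*(p₂-p₄)*((p₂+p₄)*(p₁*p₃+1) - (p₁+p₃)*(p₂*p₄+1)) := by
    rw [hI, hK]; field_simp; ring
  have e2 : J * ((p₁-p₂)*(p₂-p₃)*(p₃-p₄)*(p₄-p₁))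
      = -((p₁-p₃)*(p₂-p₄)*(p₁*p₃ - p₂*p₄)) := by
    rw [hJ]; field_simp; ring
  constructor
  · rintro ⟨hIK, hJ0⟩
    rw [hIK, sub_self, zero_mul] at e1
    rw [hJ0, zero_mul] at e2
    have hpq : p₁ * p₃ = p₂ * p₄ := by
      have h0 : (p₁-p₃)*(p₂-p₄)*(p₁*p₃ - p₂*p₄) = 0 := by linarith
      rcases mul_eq_zero.mp h0 with h' | h'
      · rcases mul_eq_zero.mp h' with h'' | h'' <;> [exact absurd h'' d13; exact absurd h'' d24]
      · linarith [sub_eq_zero.mp h']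
    have hQ : (p₁*p₃+1) * ((p₂+p₄) - (p₁+p₃)) = 0 := by
      have h0 : (p₁-p₃)*(p₂-p₄)*((p₂+p₄)*(p₁*p₃+1) - (p₁+p₃)*(p₂*p₄+1)) = 0 := e1.symm
      have h1 : (p₂+p₄)*(p₁*p₃+1) - (p₁+p₃)*(p₂*p₄+1) = 0 := by
        rcases mul_eq_zero.mp h0 with h' | h'
        · rcases mul_eq_zero.mp h' with h'' | h'' <;> [exact absurd h'' d13; exact absurd h'' d24]
        · exact h'
      linear_combination h1 - (p₁+p₃) * hpq
    rcases mul_eq_zero.mp hQ with hu | hst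
    · have h3 : p₁ * p₃ = -1 := by linarith
      exact ⟨h3, by linarith [hpq]⟩
    · exfalso
      have hst' : p₂ + p₄ = p₁ + p₃ := by linarith
      have hz : (p₁ - p₂) * (p₁ - p₄) = 0 := by linear_combination (-p₁) * hst' - hpq
      rcases mul_eq_zero.mp hz with h' | h'
      · exact d12 h'
      · exact h14 (sub_eq_zero.mp h')
  · rintro ⟨h3, h4⟩
    constructor
    · have hz : (I - K) * ((p₁-p₂)*(p₂-p₃)*(p₃-p₄)*(p₄-p₁)) = 0 := by
        rw [e1]
        linear_combination ((p₁-p₃)*(p₂-p₄)*(p₂+p₄))*h3 - ((p₁-p₃)*(p₂-p₄)*(p₁+p₃))*h4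
      rcases mul_eq_zero.mp hz with h' | h'
      · linarith [sub_eq_zero.mp (by linarith : I - K = 0)]
      · exact absurd h' hD
    · have hz : J * ((p₁-p₂)*(p₂-p₃)*(p₃-p₄)*(p₄-p₁)) = 0 := by
        rw [e2]
        linear_combination (-(p₁-p₃)*(p₂-p₄))*h3 + ((p₁-p₃)*(p₂-p₄))*h4
      rcases mul_eq_zero.mp hz with h' | h'
      · exact h'
      · exact absurd h' hD
end

section
/- Let P₁, P₂, P₃ be distinct points on the unit circle given by pₗ = tan(φₗ/2), let dₗ(X) denote the Euclidean distance from X to the line Pₗ₋₁Pₗ and σₗ the Euclidean length of the segment Pₗ₋₁Pₗ (indices mod 3). Then the locus of points X inside the triangle with d₁(X)/σ₁ = d₂(X)/σ₂ is the line through the vertex P₂ and the pole of the side P₁P₃ (hence is the hyperbolic altitude from P₂ to P₁P₃ in the Klein model). -/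
/-- determinant -/
def det2 (A B C : ℝ × ℝ) : ℝ := (B.1 - A.1) * (C.2 - A.2) - (B.2 - A.2) * (C.1 - A.1)

lemma key_s14 (A B C X : ℝ × ℝ) (hD : det2 A B C ≠ 0)
    (hX : X ∈ interior (convexHull ℝ ({A, B, C} : Set (ℝ × ℝ)))) :
    0 < det2 A B C * det2 A B X := by
  set D := det2 A B C with hDdef
  set S : Set (ℝ × ℝ) := {Y | 0 ≤ D * det2 A B Y} with hS
  have hconv : Convex ℝ S := by
    intro Y hY Z hZ a b ha hb hab
    have hY' : 0 ≤ D * det2 A B Y := hY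
    have hZ' : 0 ≤ D * det2 A B Z := hZ
    show 0 ≤ D * det2 A B (a • Y + b • Z)
    have e : D * det2 A B (a • Y + b • Z)
        = a * (D * det2 A B Y) + b * (D * det2 A B Z) := by
      simp only [det2, Prod.fst_add, Prod.snd_add, Prod.smul_fst, Prod.smul_snd, smul_eq_mul]
      linear_combination (D * (B.1 * A.2 - A.1 * B.2)) * hab
    rw [e]
    exact add_nonneg (mul_nonneg ha hY') (mul_nonneg hb hZ')
  have hsub : convexHull ℝ ({A, B, C} : Set (ℝ × ℝ)) ⊆ S := by
    apply convexHull_min _ hconv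
    intro z hz
    rcases hz with h | h | h
    · show 0 ≤ D * det2 A B z
      rw [h]
      have e : det2 A B A = 0 := by simp [det2]
      rw [e, mul_zero]
    · show 0 ≤ D * det2 A B z
      rw [h]
      have e : det2 A B B = 0 := by simp [det2]; ring
      rw [e, mul_zero]
    · show 0 ≤ D * det2 A B z
      rw [h, ← hDdef]
      exact mul_self_nonneg D
  have hXS : X ∈ interior S := interior_mono hsub hX
  have h0 : 0 ≤ D * det2 A B X := hsub (interior_subset hX)
  rcases h0.lt_or_eq with h | h
  · exact h
  exfalso
  have heq : D * det2 A B X = 0 := h.symm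
  have hAB : 0 < (B.1 - A.1) ^ 2 + (B.2 - A.2) ^ 2 := by
    rcases (lt_or_ge 0 ((B.1 - A.1) ^ 2 + (B.2 - A.2) ^ 2)) with h' | h'
    · exact h'
    exfalso
    have e1 : B.1 - A.1 = 0 := by nlinarith [sq_nonneg (B.1 - A.1), sq_nonneg (B.2 - A.2)]
    have e2 : B.2 - A.2 = 0 := by nlinarith [sq_nonneg (B.1 - A.1), sq_nonneg (B.2 - A.2)]
    apply hD
    show (B.1 - A.1) * (C.2 - A.2) - (B.2 - A.2) * (C.1 - A.1) = 0
    rw [e1, e2]; ring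
  set v : ℝ × ℝ := (-(B.2 - A.2) * D, (B.1 - A.1) * D) with hv
  have hlin : ∀ t : ℝ, D * det2 A B (X + t • v)
      = t * (D ^ 2 * ((B.1 - A.1) ^ 2 + (B.2 - A.2) ^ 2)) := by
    intro t
    have : D * det2 A B (X + t • v)
        = D * det2 A B X + t * (D ^ 2 * ((B.1 - A.1) ^ 2 + (B.2 - A.2) ^ 2)) := by
      simp only [det2, Prod.fst_add, Prod.snd_add, Prod.smul_fst, Prod.smul_snd, smul_eq_mul, hv]
      ring
    rw [this, heq]; ring
  rcases Metric.mem_nhds_iff.mp (mem_interior_iff_mem_nhds.mp hXS) with ⟨ε, hε, hball⟩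
  set t : ℝ := -(ε / (‖v‖ + 1)) with ht
  have hvpos : (0:ℝ) < ‖v‖ + 1 := by positivity
  have htneg : t < 0 := by
    have : 0 < ε / (‖v‖ + 1) := by positivity
    simpa [ht] using neg_neg_of_pos this
  have hmem : X + t • v ∈ Metric.ball X ε := by
    rw [Metric.mem_ball, dist_eq_norm]
    have : X + t • v - X = t • v := by abel
    rw [this, norm_smul]
    have h1 : ‖t‖ = ε / (‖v‖ + 1) := by
      rw [ht, norm_neg, Real.norm_eq_abs, abs_of_pos (by positivity)]
    rw [h1]
    calc ε / (‖v‖ + 1) * ‖v‖ < ε / (‖v‖ + 1) * (‖v‖ + 1) := by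
          apply mul_lt_mul_of_pos_left (by linarith) (by positivity)
      _ = ε := by field_simp
  have hmemS : X + t • v ∈ S := hball hmem
  have : 0 ≤ D * det2 A B (X + t • v) := hmemS
  rw [hlin t] at this
  have hc : 0 < D ^ 2 * ((B.1 - A.1) ^ 2 + (B.2 - A.2) ^ 2) := by positivity
  nlinarith




/-- Euclidean distance from `X` to the line through `A` and `B` in `ℝ²`. -/
noncomputable def distLine (A B X : ℝ × ℝ) : ℝ :=
  |(B.1 - A.1) * (X.2 - A.2) - (B.2 - A.2) * (X.1 - A.1)| /
    Real.sqrt ((B.1 - A.1) ^ 2 + (B.2 - A.2) ^ 2)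

/-- Euclidean length of the segment `AB`. -/
noncomputable def segLen (A B : ℝ × ℝ) : ℝ :=
  Real.sqrt ((B.1 - A.1) ^ 2 + (B.2 - A.2) ^ 2)

set_option maxHeartbeats 2000000 in
/-- For a triangle `P₁P₂P₃` inscribed in the unit circle, the locus of interior points `X`
whose distances to the sides `P₁P₂` and `P₂P₃` are proportional to their lengths is the
line through the vertex `P₂` and the pole of `P₁P₃` — the hyperbolic altitude from `P₂`
to `P₁P₃` in the Klein model. -/
theorem stmt_14 (φ₁ φ₂ φ₃ p₁ p₂ p₃ : ℝ)
    (hp₁ : p₁ = Real.tan (φ₁ / 2)) (hp₂ : p₂ = Real.tan (φ₂ / 2))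
    (hp₃ : p₃ = Real.tan (φ₃ / 2))
    (h12 : p₁ ≠ p₂) (h23 : p₂ ≠ p₃) (h31 : p₃ ≠ p₁)
    (hpole : p₁ * p₃ ≠ -1)
    (X : ℝ × ℝ)
    (hX : X ∈ interior (convexHull ℝ ({circlePt p₁, circlePt p₂, circlePt p₃} : Set (ℝ × ℝ)))) :
    distLine (circlePt p₁) (circlePt p₂) X / segLen (circlePt p₁) (circlePt p₂)
        = distLine (circlePt p₂) (circlePt p₃) X / segLen (circlePt p₂) (circlePt p₃)
      ↔ Collin (circlePt p₂) (chordPole p₁ p₃) X := by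
  set A := circlePt p₁ with hA
  set B := circlePt p₂ with hB
  set C := circlePt p₃ with hC
  set P := chordPole p₁ p₃ with hP
  have hT : (1 : ℝ) + p₁ * p₃ ≠ 0 := fun h => hpole (by linarith)
  have ht1 : (0 : ℝ) < 1 + p₁ ^ 2 := by positivity
  have ht2 : (0 : ℝ) < 1 + p₂ ^ 2 := by positivity
  have ht3 : (0 : ℝ) < 1 + p₃ ^ 2 := by positivity
  have h21 : p₂ - p₁ ≠ 0 := sub_ne_zero.mpr (Ne.symm h12)
  have h32 : p₃ - p₂ ≠ 0 := sub_ne_zero.mpr (Ne.symm h23)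
  have h13 : p₃ - p₁ ≠ 0 := sub_ne_zero.mpr h31
  set s1 : ℝ := (B.1 - A.1) ^ 2 + (B.2 - A.2) ^ 2 with hs1def
  set s2 : ℝ := (C.1 - B.1) ^ 2 + (C.2 - B.2) ^ 2 with hs2def
  have hs1 : s1 = 4 * (p₂ - p₁) ^ 2 / ((1 + p₁ ^ 2) * (1 + p₂ ^ 2)) := by
    rw [hs1def, hA, hB]
    simp only [circlePt]
    field_simp
    ring
  have hs2 : s2 = 4 * (p₃ - p₂) ^ 2 / ((1 + p₂ ^ 2) * (1 + p₃ ^ 2)) := by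
    rw [hs2def, hB, hC]
    simp only [circlePt]
    field_simp
    ring
  have hs1pos : 0 < s1 := by rw [hs1]; positivity
  have hs2pos : 0 < s2 := by rw [hs2]; positivity
  set D : ℝ := det2 A B C with hDdef
  have hDval : D = 4 * (p₂ - p₁) * (p₃ - p₂) * (p₃ - p₁) /
      ((1 + p₁ ^ 2) * (1 + p₂ ^ 2) * (1 + p₃ ^ 2)) := by
    rw [hDdef, hA, hB, hC]
    simp only [det2, circlePt]
    field_simp
    ring
  have hDne : D ≠ 0 := by
    rw [hDval]
    apply div_ne_zero
    · positivity
    · positivity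
  -- interior sign facts
  have h1 : 0 < D * det2 A B X := key_s14 A B C X hDne hX
  have hsetEq : ({A, B, C} : Set (ℝ × ℝ)) = {B, C, A} := by
    ext z
    simp only [Set.mem_insert_iff, Set.mem_singleton_iff]
    tauto
  have hX' : X ∈ interior (convexHull ℝ ({B, C, A} : Set (ℝ × ℝ))) := by
    rw [← hsetEq]; exact hX
  have hdetBCA : det2 B C A = D := by rw [hDdef]; simp only [det2]; ring
  have h2 : 0 < D * det2 B C X := by
    have := key_s14 B C A X (by rw [hdetBCA]; exact hDne) hX'
    rwa [hdetBCA] at this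
  -- the main algebraic identity
  set k : ℝ := 8 * (p₂ - p₁) * (p₃ - p₂) * (1 + p₁ * p₃) /
      ((1 + p₁ ^ 2) * (1 + p₂ ^ 2) * (1 + p₃ ^ 2)) with hk
  have hkne : k ≠ 0 := by
    rw [hk]
    apply div_ne_zero
    · intro h
      rcases mul_eq_zero.mp h with h' | h'
      · rcases mul_eq_zero.mp h' with h'' | h''
        · rcases mul_eq_zero.mp h'' with h3 | h3
          · norm_num at h3
          · exact h21 h3
        · exact h32 h''
      · exact hT h'
    · positivity
  have hId : det2 A B X * s2 - det2 B C X * s1 = k * det2 B P X := by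
    rw [hs1, hs2, hk, hA, hB, hC, hP]
    simp only [det2, circlePt, chordPole]
    field_simp
    ring
  -- reduce LHS of the iff
  have hred1 : distLine A B X / segLen A B = |det2 A B X| / s1 := by
    rw [distLine, segLen, div_div, Real.mul_self_sqrt hs1pos.le]
    rfl
  have hred2 : distLine B C X / segLen B C = |det2 B C X| / s2 := by
    rw [distLine, segLen, div_div, Real.mul_self_sqrt hs2pos.le]
    rfl
  rw [hred1, hred2, div_eq_div_iff hs1pos.ne' hs2pos.ne']
  -- remove absolute values
  have e1 : |det2 A B X| * |D| = D * det2 A B X := by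
    rw [← abs_mul, mul_comm (det2 A B X) D, abs_of_pos h1]
  have e2 : |det2 B C X| * |D| = D * det2 B C X := by
    rw [← abs_mul, mul_comm (det2 B C X) D, abs_of_pos h2]
  have habs : |det2 A B X| * s2 = |det2 B C X| * s1
      ↔ det2 A B X * s2 = det2 B C X * s1 := by
    constructor
    · intro h
      have h' : D * (det2 A B X * s2) = D * (det2 B C X * s1) := by
        linear_combination (-s2) * e1 + s1 * e2 + |D| * h
      exact mul_left_cancel₀ hDne h'
    · intro h
      have h' : |det2 A B X| * s2 * |D| = |det2 B C X| * s1 * |D| := by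
        linear_combination s2 * e1 + (-s1) * e2 + D * h
      exact mul_right_cancel₀ (abs_ne_zero.mpr hDne) h'
  rw [habs]
  have hCol : Collin B P X ↔ det2 B P X = 0 := Iff.rfl
  rw [hCol]
  constructor
  · intro h
    have : k * det2 B P X = 0 := by rw [← hId]; linarith
    exact (mul_eq_zero.mp this).resolve_left hkne
  · intro h
    have : det2 A B X * s2 - det2 B C X * s1 = 0 := by rw [hId, h, mul_zero]
    linarith
end
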